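/- Let P be a monic real polynomial of degree d and 0 ≤ r ≤ d. Then (−1)^{d+r} P(x) > 0 for every x in the open interval U_{d,r+1}(P) = (ρ_{d,r}(P), ρ_{d,r+1}(P)), whenever this interval is nonempty. In particular P has a fixed, alternating sign between consecutive virtual roots, just as a hyperbolic polynomial does between its actual roots. -/

import Mathlib

open Polynomial Set

noncomputable def monicPoly (d : ℕ) (c : Fin d → ℝ) : Polynomial ℝ :=
  X ^ d + ∑ i : Fin d, C (c i) * X ^ (i : ℕ)

noncomputable def dCoeff {d : ℕ} (c : Fin (d + 1) → ℝ) : Fin d → ℝ :=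
  fun i => c i.succ * ((i : ℕ) + 1) / (d + 1)

noncomputable def bnd {d : ℕ} (c : Fin d → ℝ) : ℝ := 1 + ⨆ i, |c i|

/-- The point of `[a,b]` where `|P|` attains its minimum. -/
noncomputable def Rmin (a b : ℝ) (P : Polynomial ℝ) : ℝ :=
  if h : a ≤ b then
    (isCompact_Icc.exists_isMinOn (Set.nonempty_Icc.mpr h)
      ((continuous_abs.comp P.continuous).continuousOn)).choose
  else a

/-- The `j`-th virtual root of the monic polynomial with coefficient vector `c`,
defined inductively as the minimizer of `|P|` between consecutive virtual roots
of `P/d`, infinite endpoints being handled by the Cauchy root bound `bnd`. -/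
noncomputable def vroot : (d : ℕ) → ℤ → (Fin d → ℝ) → ℝ
  | 0, _, _ => 0
  | d + 1, j, c =>
    Rmin (if 1 < j then vroot d (j - 1) (dCoeff c) else -(bnd c))
      (if j < (d : ℤ) + 1 then vroot d j (dCoeff c) else bnd c)
      (monicPoly (d + 1) c)


/-- Virtual roots with the conventions `ρ_{d,j} = -∞` for `j ≤ 0` and `+∞` for `j > d`. -/
noncomputable def vrootE (d : ℕ) (j : ℤ) (c : Fin d → ℝ) : EReal :=
  if j ≤ 0 then ⊥ else if (d : ℤ) < j then ⊤ else ((vroot d j c : ℝ) : EReal)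

/-!
Induction on `d`, with `P' = (d + 1) Q` for the monic `Q` of `dCoeff c`. Between consecutive
virtual roots of `Q` (the outer ones replaced by `∓ bnd c`) the sign of `P'` is fixed by
induction, so `±P` is strictly increasing there; as `ρ_{d+1,j}` minimises `|P|` on that
segment, `P` has one sign to its right and the opposite sign to its left. Beyond `± bnd c` the
leading term `x ^ d` dominates (Cauchy's bound), which settles the two unbounded intervals.
-/

section Bounds

variable {d : ℕ}

lemma abs_le_bnd_sub_one (c : Fin d → ℝ) (i : Fin d) : |c i| ≤ bnd c - 1 := by
  rw [bnd, add_sub_cancel_left]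
  exact le_ciSup (Finite.bddAbove (finite_range fun i => |c i|)) i

lemma one_le_bnd (c : Fin d → ℝ) : 1 ≤ bnd c := by
  rcases isEmpty_or_nonempty (Fin d) with h | ⟨⟨i⟩⟩
  · simp [bnd]
  · linarith [abs_le_bnd_sub_one c i, abs_nonneg (c i)]

lemma abs_dCoeff_le (c : Fin (d + 1) → ℝ) (i : Fin d) : |dCoeff c i| ≤ |c i.succ| := by
  have hi : ((i : ℕ) : ℝ) + 1 ≤ d + 1 := by
    have := i.isLt
    exact_mod_cast (by omega : (i : ℕ) + 1 ≤ d + 1)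
  rw [dCoeff, abs_div, abs_mul, abs_of_pos (by positivity : (0 : ℝ) < i + 1),
    abs_of_pos (by positivity : (0 : ℝ) < d + 1), div_le_iff₀ (by positivity)]
  exact mul_le_mul_of_nonneg_left hi (abs_nonneg _)

lemma bnd_dCoeff_le (c : Fin (d + 1) → ℝ) : bnd (dCoeff c) ≤ bnd c := by
  have h := Real.iSup_le (fun i : Fin d => (abs_dCoeff_le c i).trans (abs_le_bnd_sub_one c i.succ))
    (sub_nonneg.2 (one_le_bnd c))
  rw [bnd]
  linarith

end Bounds

section CauchyBound

variable {d : ℕ} (c : Fin d → ℝ) {x : ℝ}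

lemma eval_monicPoly : (monicPoly d c).eval x = x ^ d + ∑ i, c i * x ^ (i : ℕ) := by
  simp [monicPoly, eval_finsetSum]

lemma abs_sum_lt_pow (hx : bnd c ≤ |x|) : |∑ i, c i * x ^ (i : ℕ)| < |x| ^ d :=
  calc |∑ i, c i * x ^ (i : ℕ)|
      ≤ ∑ i : Fin d, (|x| - 1) * |x| ^ (i : ℕ) := by
        refine (Finset.abs_sum_le_sum_abs _ _).trans (Finset.sum_le_sum fun i _ => ?_)
        rw [abs_mul, abs_pow]
        gcongr
        linarith [abs_le_bnd_sub_one c i]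
    _ = (∑ i ∈ Finset.range d, |x| ^ i) * (|x| - 1) := by
        rw [← Fin.sum_univ_eq_sum_range, Finset.sum_mul]
        simp only [mul_comm]
    _ = |x| ^ d - 1 := geom_sum_mul _ _
    _ < |x| ^ d := sub_one_lt _

lemma eval_monicPoly_pos_of_bnd_le (hx : bnd c ≤ x) : 0 < (monicPoly d c).eval x := by
  have hx0 : |x| = x := abs_of_nonneg (by linarith [one_le_bnd c])
  have h := abs_sum_lt_pow c (hx0.symm ▸ hx)
  rw [hx0] at h
  rw [eval_monicPoly]
  linarith [neg_abs_le (∑ i, c i * x ^ (i : ℕ))]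

lemma neg_one_pow_mul_eval_monicPoly_pos_of_le_neg_bnd (hx : x ≤ -bnd c) :
    0 < (-1) ^ d * (monicPoly d c).eval x := by
  have hx0 : |x| = -x := abs_of_nonpos (by linarith [one_le_bnd c])
  have h := abs_sum_lt_pow c (x := x) (by linarith)
  have hlead : (-1) ^ d * x ^ d = |x| ^ d := by rw [hx0, neg_pow x]
  have hsum : |(-1) ^ d * ∑ i, c i * x ^ (i : ℕ)| = |∑ i, c i * x ^ (i : ℕ)| := by
    rw [abs_mul, abs_neg_one_pow, one_mul]
  rw [eval_monicPoly, mul_add, hlead]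
  linarith [neg_abs_le ((-1) ^ d * ∑ i, c i * x ^ (i : ℕ))]

end CauchyBound

lemma derivative_monicPoly (d : ℕ) (c : Fin (d + 1) → ℝ) :
    derivative (monicPoly (d + 1) c) = C ((d : ℝ) + 1) * monicPoly d (dCoeff c) := by
  have hd : (d : ℝ) + 1 ≠ 0 := by positivity
  rw [monicPoly, derivative_add, derivative_X_pow, derivative_sum, monicPoly, mul_add,
    Finset.mul_sum, Fin.sum_univ_succ]
  simp only [derivative_C_mul_X_pow, Fin.val_zero, Fin.val_succ, Nat.cast_zero, mul_zero,
    map_zero, zero_mul, zero_add, add_tsub_cancel_right, Nat.cast_add, Nat.cast_one]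
  congr 1
  refine Finset.sum_congr rfl fun i _ => ?_
  rw [dCoeff, ← mul_assoc, ← C_mul, mul_div_cancel₀ _ hd, C_mul]

lemma Rmin_spec {a b : ℝ} (h : a ≤ b) (P : ℝ[X]) :
    Rmin a b P ∈ Icc a b ∧ IsMinOn (fun y => |P.eval y|) (Icc a b) (Rmin a b P) := by
  rw [Rmin, dif_pos h]
  exact (isCompact_Icc.exists_isMinOn (nonempty_Icc.mpr h)
    ((continuous_abs.comp P.continuous).continuousOn)).choose_spec

section MinAbs

variable {f : ℝ → ℝ} {s : Set ℝ} {t x : ℝ}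

lemma pos_of_isMinOn_abs (hf : StrictMonoOn f s) (hmin : IsMinOn (fun y => |f y|) s t)
    (ht : t ∈ s) (hx : x ∈ s) (htx : t < x) : 0 < f x := by
  have hlt := hf ht hx htx
  have hle : |f t| ≤ |f x| := hmin hx
  by_contra! h
  rw [abs_of_neg (hlt.trans_le h), abs_of_nonpos h] at hle
  linarith

lemma neg_of_isMinOn_abs (hf : StrictMonoOn f s) (hmin : IsMinOn (fun y => |f y|) s t)
    (ht : t ∈ s) (hx : x ∈ s) (hxt : x < t) : f x < 0 := by
  have hlt := hf hx ht hxt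
  have hle : |f t| ≤ |f x| := hmin hx
  by_contra! h
  rw [abs_of_pos (h.trans_lt hlt), abs_of_nonneg h] at hle
  linarith

end MinAbs

lemma sign_around_Rmin (P : ℝ[X]) {a b σ : ℝ} (hab : a ≤ b) (hσ : |σ| = 1)
    (hP' : ∀ y ∈ Ioo a b, 0 < σ * (derivative P).eval y) :
    (∀ x ∈ Ioc (Rmin a b P) b, 0 < σ * P.eval x) ∧
      ∀ x ∈ Ico a (Rmin a b P), σ * P.eval x < 0 := by
  obtain ⟨ht, hmin⟩ := Rmin_spec hab P
  have hmono : StrictMonoOn (fun y => σ * P.eval y) (Icc a b) := by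
    refine strictMonoOn_of_deriv_pos (convex_Icc a b) (by fun_prop) fun y hy => ?_
    rw [interior_Icc] at hy
    rw [deriv_const_mul _ P.differentiableAt, Polynomial.deriv]
    exact hP' y hy
  have hmin' : IsMinOn (fun y => |σ * P.eval y|) (Icc a b) (Rmin a b P) := by
    simpa only [abs_mul, hσ, one_mul] using hmin
  refine ⟨fun x hx => ?_, fun x hx => ?_⟩
  · exact pos_of_isMinOn_abs (f := fun y => σ * P.eval y) hmono hmin' ht
      ⟨ht.1.trans hx.1.le, hx.2⟩ hx.1
  · exact neg_of_isMinOn_abs (f := fun y => σ * P.eval y) hmono hmin' ht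
      ⟨hx.1, hx.2.le.trans ht.2⟩ hx.2

noncomputable def clampedVroot (d : ℕ) (c : Fin d → ℝ) (B : ℝ) (j : ℤ) : ℝ :=
  if j ≤ 0 then -B else if (d : ℤ) < j then B else vroot d j c

section Clamped

variable {d : ℕ} (c : Fin d → ℝ) (B : ℝ) {j : ℤ}

lemma clampedVroot_of_nonpos (hj : j ≤ 0) : clampedVroot d c B j = -B := if_pos hj

lemma clampedVroot_of_lt (hj : (d : ℤ) < j) : clampedVroot d c B j = B := by
  rw [clampedVroot, if_neg (by omega), if_pos hj]

lemma clampedVroot_of_pos_of_le (h1 : 0 < j) (h2 : j ≤ d) :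
    clampedVroot d c B j = vroot d j c := by
  rw [clampedVroot, if_neg (by omega), if_neg (by omega)]

lemma vrootE_of_pos_of_le (h1 : 0 < j) (h2 : j ≤ d) : vrootE d j c = vroot d j c := by
  rw [vrootE, if_neg (by omega), if_neg (by omega)]

lemma vrootE_le_clampedVroot (hj : j ≤ d) : vrootE d j c ≤ clampedVroot d c B j := by
  rcases le_or_gt j 0 with h0 | h0
  · rw [vrootE, if_pos h0]
    exact bot_le
  · rw [vrootE_of_pos_of_le c h0 hj, clampedVroot_of_pos_of_le c B h0 hj]

lemma clampedVroot_le_vrootE (hj : 0 < j) : (clampedVroot d c B j : EReal) ≤ vrootE d j c := by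
  rcases le_or_gt j d with hd | hd
  · rw [vrootE_of_pos_of_le c hj hd, clampedVroot_of_pos_of_le c B hj hd]
  · rw [vrootE, if_neg (by omega), if_pos hd]
    exact le_top

lemma clampedVroot_lt_of_vrootE_lt {x : ℝ} (hx : -B < x) (h : vrootE d j c < x) :
    clampedVroot d c B j < x := by
  rcases le_or_gt j 0 with hj | hj
  · rwa [clampedVroot_of_nonpos c B hj]
  · exact_mod_cast (clampedVroot_le_vrootE c B hj).trans_lt h

lemma lt_clampedVroot_of_lt_vrootE {x : ℝ} (hx : x < B) (h : x < vrootE d j c) :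
    x < clampedVroot d c B j := by
  rcases le_or_gt j d with hj | hj
  · exact_mod_cast h.trans_le (vrootE_le_clampedVroot c B hj)
  · rwa [clampedVroot_of_lt c B hj]

end Clamped

lemma vroot_succ_eq_Rmin {d : ℕ} (c : Fin (d + 1) → ℝ) {k : ℕ} (hk : k ≤ d) :
    vroot (d + 1) ((k : ℤ) + 1) c =
      Rmin (clampedVroot d (dCoeff c) (bnd c) k) (clampedVroot d (dCoeff c) (bnd c) ((k : ℤ) + 1))
        (monicPoly (d + 1) c) := by
  rw [vroot]
  congr 1
  · split_ifs with h
    · rw [clampedVroot_of_pos_of_le _ _ (by omega) (by omega), add_sub_cancel_right]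
    · rw [clampedVroot_of_nonpos _ _ (by omega)]
  · split_ifs with h
    · rw [clampedVroot_of_pos_of_le _ _ (by omega) (by omega)]
    · rw [clampedVroot_of_lt _ _ (by omega)]

theorem monotone_clampedVroot : ∀ {d : ℕ} (c : Fin d → ℝ) {B : ℝ}, bnd c ≤ B →
    Monotone (clampedVroot d c B)
  | 0, c, B, hB => by
    have hB' : -B ≤ B := by linarith [one_le_bnd c]
    refine monotone_int_of_le_succ fun j => ?_
    rcases lt_or_ge j 0 with hj | hj
    · rw [clampedVroot_of_nonpos c B hj.le, clampedVroot_of_nonpos c B (by omega)]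
    · rw [clampedVroot_of_lt c B (by omega : ((0 : ℕ) : ℤ) < j + 1)]
      rcases hj.lt_or_eq with hj | rfl
      · rw [clampedVroot_of_lt c B (by omega)]
      · rwa [clampedVroot_of_nonpos c B le_rfl]
  | d + 1, c, B, hB => by
    set a := clampedVroot d (dCoeff c) (bnd c)
    have ha : Monotone a := monotone_clampedVroot (dCoeff c) (bnd_dCoeff_le c)
    have ha0 : a 0 = -bnd c := clampedVroot_of_nonpos _ _ le_rfl
    have haD : a ((d : ℤ) + 1) = bnd c := clampedVroot_of_lt _ _ (by omega)
    have hmem : ∀ k : ℕ, k ≤ d →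
        clampedVroot (d + 1) c B ((k : ℤ) + 1) ∈ Icc (a k) (a (k + 1)) := by
      intro k hk
      rw [clampedVroot_of_pos_of_le _ _ (by omega) (by omega), vroot_succ_eq_Rmin c hk]
      exact (Rmin_spec (ha (by omega)) _).1
    refine monotone_int_of_le_succ fun j => ?_
    rcases lt_or_ge j 0 with hj | hj
    · rw [clampedVroot_of_nonpos c B hj.le, clampedVroot_of_nonpos c B (by omega)]
    lift j to ℕ using hj
    rcases Nat.lt_or_ge (d + 1) j with hj | hj
    · rw [clampedVroot_of_lt c B (by omega), clampedVroot_of_lt c B (by omega)]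
    cases j with
    | zero =>
      rw [Nat.cast_zero, clampedVroot_of_nonpos c B le_rfl]
      refine le_trans ?_ (hmem 0 (by omega)).1
      rw [Nat.cast_zero, ha0]
      linarith
    | succ k =>
      push_cast
      refine ((hmem k (by omega)).2).trans ?_
      rcases Nat.lt_or_ge k d with hk | hk
      · exact_mod_cast (hmem (k + 1) hk).1
      · obtain rfl : k = d := by omega
        rwa [haD, clampedVroot_of_lt c B (by omega)]

lemma clampedVroot_mem_Icc {d : ℕ} (c : Fin d → ℝ) {B : ℝ} (hB : bnd c ≤ B) (j : ℤ) :
    clampedVroot d c B j ∈ Icc (-B) B := by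
  have hmono := monotone_clampedVroot c hB
  constructor
  · rcases le_or_gt j 0 with h | h
    · rw [clampedVroot_of_nonpos c B h]
    · simpa only [clampedVroot_of_nonpos c B le_rfl] using hmono h.le
  · rcases le_or_gt j d with h | h
    · simpa only [clampedVroot_of_lt c B (lt_add_one (d : ℤ))] using
        hmono (show j ≤ (d : ℤ) + 1 by omega)
    · rw [clampedVroot_of_lt c B h]

def SignAlternates (d : ℕ) (c : Fin d → ℝ) : Prop :=
  ∀ r : ℕ, r ≤ d → ∀ x : ℝ, vrootE d r c < x →
    (x : EReal) < vrootE d ((r : ℤ) + 1) c →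
    0 < (-1 : ℝ) ^ (d + r) * (monicPoly d c).eval x

lemma signAlternates_zero (c : Fin 0 → ℝ) : SignAlternates 0 c := by
  intro r hr x _ _
  obtain rfl : r = 0 := by omega
  simp [monicPoly]

section Succ

variable {d : ℕ} (c : Fin (d + 1) → ℝ)

lemma sign_near_vroot_succ (ih : SignAlternates d (dCoeff c)) {k : ℕ} (hk : k ≤ d) :
    (∀ x ∈ Ioc (vroot (d + 1) ((k : ℤ) + 1) c)
        (clampedVroot d (dCoeff c) (bnd c) ((k : ℤ) + 1)),
        0 < (-1) ^ (d + k) * (monicPoly (d + 1) c).eval x) ∧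
      ∀ x ∈ Ico (clampedVroot d (dCoeff c) (bnd c) k) (vroot (d + 1) ((k : ℤ) + 1) c),
        (-1) ^ (d + k) * (monicPoly (d + 1) c).eval x < 0 := by
  rw [vroot_succ_eq_Rmin c hk]
  refine sign_around_Rmin _ (monotone_clampedVroot _ (bnd_dCoeff_le c) (by omega))
    (abs_neg_one_pow _) fun y hy => ?_
  rw [derivative_monicPoly, eval_mul, eval_C, mul_left_comm]
  refine mul_pos (by positivity) (ih k hk y ?_ ?_)
  · exact (vrootE_le_clampedVroot _ _ (by omega)).trans_lt (EReal.coe_lt_coe_iff.2 hy.1)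
  · exact (EReal.coe_lt_coe_iff.2 hy.2).trans_le (clampedVroot_le_vrootE _ _ (by omega))

lemma sign_between_clampedVroot_succ (ih : SignAlternates d (dCoeff c)) {r : ℕ}
    (hr : r ≤ d + 1) {x : ℝ} (hx : x ∈ Ioo (clampedVroot (d + 1) c (bnd c) r)
      (clampedVroot (d + 1) c (bnd c) ((r : ℤ) + 1))) :
    0 < (-1 : ℝ) ^ (d + 1 + r) * (monicPoly (d + 1) c).eval x := by
  set a := clampedVroot d (dCoeff c) (bnd c)
  rcases le_or_gt x (a r) with hxa | hax
  · obtain ⟨k, rfl⟩ : ∃ k, r = k + 1 := by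
      refine Nat.exists_eq_add_one.2 (Nat.pos_of_ne_zero ?_)
      rintro rfl
      have h0 : a ((0 : ℕ) : ℤ) = -bnd c := clampedVroot_of_nonpos _ _ le_rfl
      have h0' : clampedVroot (d + 1) c (bnd c) ((0 : ℕ) : ℤ) = -bnd c :=
        clampedVroot_of_nonpos _ _ le_rfl
      linarith [hx.1]
    have hk : k ≤ d := by omega
    have hxt := hx.1
    rw [Nat.cast_succ, clampedVroot_of_pos_of_le _ _ (by omega) (by omega)] at hxt
    have := (sign_near_vroot_succ c ih hk).1 x ⟨hxt, by exact_mod_cast hxa⟩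
    rwa [show d + 1 + (k + 1) = d + k + 2 by ring, pow_add, neg_one_sq, mul_one]
  · have hr' : r ≤ d := by
      by_contra! hrd
      obtain rfl : r = d + 1 := by omega
      have h1 : a ((d + 1 : ℕ) : ℤ) = bnd c := clampedVroot_of_lt _ _ (by omega)
      have h2 : clampedVroot (d + 1) c (bnd c) (((d + 1 : ℕ) : ℤ) + 1) = bnd c :=
        clampedVroot_of_lt _ _ (by omega)
      linarith [hx.2]
    have hxt := hx.2
    rw [clampedVroot_of_pos_of_le _ _ (by omega) (by omega)] at hxt
    have := (sign_near_vroot_succ c ih hr').2 x ⟨hax.le, hxt⟩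
    rw [show d + 1 + r = d + r + 1 by ring, pow_succ]
    linarith

end Succ

lemma signAlternates_of_sign_between_clampedVroot {d : ℕ} (c : Fin d → ℝ)
    (h : ∀ r : ℕ, r ≤ d → ∀ x ∈ Ioo (clampedVroot d c (bnd c) r)
      (clampedVroot d c (bnd c) ((r : ℤ) + 1)),
        0 < (-1 : ℝ) ^ (d + r) * (monicPoly d c).eval x) :
    SignAlternates d c := by
  intro r hr x hx1 hx2
  have hmem := clampedVroot_mem_Icc c le_rfl
  rcases le_or_gt x (-bnd c) with hxl | hxl
  · obtain rfl : r = 0 := by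
      by_contra hr0
      have := (clampedVroot_le_vrootE c (bnd c) (by omega)).trans_lt hx1
      linarith [(hmem r).1, EReal.coe_lt_coe_iff.1 this]
    simpa using neg_one_pow_mul_eval_monicPoly_pos_of_le_neg_bnd c hxl
  rcases le_or_gt (bnd c) x with hxu | hxu
  · obtain rfl : r = d := by
      by_contra hrd
      have := hx2.trans_le (vrootE_le_clampedVroot c (bnd c) (by omega))
      linarith [(hmem (r + 1)).2, EReal.coe_lt_coe_iff.1 this]
    rw [← two_mul, pow_mul, neg_one_sq, one_pow, one_mul]
    exact eval_monicPoly_pos_of_bnd_le c hxu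
  exact h r hr x
    ⟨clampedVroot_lt_of_vrootE_lt c _ hxl hx1, lt_clampedVroot_of_lt_vrootE c _ hxu hx2⟩

theorem signAlternates : ∀ (d : ℕ) (c : Fin d → ℝ), SignAlternates d c
  | 0, c => signAlternates_zero c
  | d + 1, c => signAlternates_of_sign_between_clampedVroot c fun _ hr _ hx =>
      sign_between_clampedVroot_succ c (signAlternates d (dCoeff c)) hr hx

/-- a monic polynomial of degree `d` has the fixed sign
`(-1)^{d+r}` on the open interval `U_{d,r+1}(P) = (ρ_{d,r}(P), ρ_{d,r+1}(P))`
(with the conventions `ρ_{d,0} = -∞`, `ρ_{d,d+1} = +∞`). -/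
theorem sign_between_virtual_roots (d : ℕ) (c : Fin d → ℝ) (r : ℕ) (hr : r ≤ d)
    (x : ℝ) (hx1 : vrootE d (r : ℤ) c < (x : EReal))
    (hx2 : (x : EReal) < vrootE d ((r : ℤ) + 1) c) :
    0 < (-1 : ℝ) ^ (d + r) * (monicPoly d c).eval x :=
  signAlternates d c r hr x hx1 hx2
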